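/- For the DRR Mealy machine with states m1, m2, m3 in the one-state game (m1: output b then update uniformly to m2 or m3; m2: output uniform on {a, b}, playing a resets to m1, playing b stays in m2; m3: output b, self-loop), for every word w ∈ ((sb)^+ sa)^* the memory distribution after w is Dirac at m1, and for every k ≥ 1 the distribution after w(sb)^k satisfies μ(m2) = 1/(2^{k−1} + 1) = 1 − μ(m3). -/

import Mathlib

/-!
From `m1`, playing `b` splits the memory evenly between `m2` and `m3`. Conditioning a mixture
`(p, 1 - p)` on `(m2, m3)` on the action `b`, which `m2` emits with probability `1/2` and `m3`
always, gives `p / (2 - p)`; this maps `1 / (2^j + 1)` to `1 / (2^(j+1) + 1)`. Only `m2` can emit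
`a`, and it then resets to `m1`, so every block `b^+ a` returns the memory to the Dirac at `m1`.
-/

open Filter
open scoped Classical

/-- A stochastic Mealy machine for the one-state game with two actions
(`true` = action a, `false` = action b). -/
structure OneMealy (n : ℕ) where
  init : Fin n → ℝ
  next : Fin n → Bool → ℝ
  up : Fin n → Bool → Fin n → ℝ

def Proper {n : ℕ} (N : OneMealy n) : Prop :=
  (∀ m, 0 ≤ N.init m) ∧ (∑ m, N.init m) = 1 ∧
  (∀ m c, 0 ≤ N.next m c) ∧ (∀ m, ∑ c, N.next m c = 1) ∧
  (∀ m c m', 0 ≤ N.up m c m') ∧ ∀ m c, ∑ m', N.up m c m' = 1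

def IsDirac {α : Type} (μ : α → ℝ) : Prop := ∃ x, ∀ y, μ y = if y = x then 1 else 0

def DetInit {n : ℕ} (N : OneMealy n) : Prop := IsDirac N.init
def DetNext {n : ℕ} (N : OneMealy n) : Prop := ∀ m, IsDirac (N.next m)
def DetUp {n : ℕ} (N : OneMealy n) : Prop := ∀ m c, IsDirac (N.up m c)

/-- Bayesian update of the memory distribution upon playing action `c`. -/
noncomputable def ostep {n : ℕ} (N : OneMealy n) (μ : Fin n → ℝ) (c : Bool) :
    Fin n → ℝ :=
  if (∑ m', μ m' * N.next m' c) = 0 then fun m => ∑ m', μ m' * N.up m' c m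
  else fun m => (∑ m', μ m' * N.up m' c m * N.next m' c) / (∑ m', μ m' * N.next m' c)

/-- Distribution over memory states after the word `w` of actions. -/
noncomputable def omemDist {n : ℕ} (N : OneMealy n) (w : List Bool) : Fin n → ℝ :=
  w.foldl (ostep N) N.init

/-- The strategy induced by the machine. -/
noncomputable def oStrat {n : ℕ} (N : OneMealy n) (w : List Bool) (c : Bool) : ℝ :=
  ∑ m, omemDist N w m * N.next m c

/-- Probability of the cylinder of the finite action word `l` under strategy `σ`. -/
def cylProb (σ : List Bool → Bool → ℝ) (l : List Bool) : ℝ :=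
  ∏ i ∈ Finset.range l.length, σ (l.take i) (l.getD i false)

/-- Outcome equivalence in the one-state game: identical cylinder probabilities. -/
noncomputable def OEquiv {n k : ℕ} (N : OneMealy n) (B : OneMealy k) : Prop :=
  ∀ w : List Bool, cylProb (oStrat N) w = cylProb (oStrat B) w

/-- Consistency of an action word with a strategy. -/
def consistentW (σ : List Bool → Bool → ℝ) (w : List Bool) : Prop :=
  ∀ i < w.length, 0 < σ (w.take i) (w.getD i false)

/-- The DRR machine of the statement: memory states `0 = m1`, `1 = m2`,
`2 = m3`; initial state `m1`. In `m1` the output is `b` and the update is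
uniform on `{m2, m3}`; in `m2` the output is uniform on `{a, b}`, playing `a`
resets to `m1` and playing `b` stays in `m2`; in `m3` the output is `b` with a
self-loop. (`true` = a, `false` = b.) -/
noncomputable def N17 : OneMealy 3 where
  init := fun m => if m = 0 then 1 else 0
  next := fun m c => if m = 1 then 1 / 2 else if c then 0 else 1
  up := fun m c m' =>
    if m = 0 then (if c then (if m' = 0 then 1 else 0)
                   else (if m' = 0 then 0 else 1 / 2))
    else if m = 1 then (if c then (if m' = 0 then 1 else 0)
                        else (if m' = 1 then 1 else 0))
    else (if m' = 2 then 1 else 0)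

/-- Words in `((sb)^+ sa)^*`, i.e. of the form `(b^+ a)^*` over actions. -/
inductive ResetWord : List Bool → Prop
  | nil : ResetWord []
  | step (w : List Bool) (k : ℕ) (hk : 1 ≤ k) (hw : ResetWord w) :
      ResetWord (w ++ List.replicate k false ++ [true])

lemma ostep_apply_of_ne_zero {n : ℕ} (N : OneMealy n) (μ : Fin n → ℝ) (c : Bool) (m : Fin n)
    (h : ∑ m', μ m' * N.next m' c ≠ 0) :
    ostep N μ c m = (∑ m', μ m' * N.up m' c m * N.next m' c) / ∑ m', μ m' * N.next m' c := by
  rw [ostep, if_neg h]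

lemma omemDist_append {n : ℕ} (N : OneMealy n) (w v : List Bool) :
    omemDist N (w ++ v) = v.foldl (ostep N) (omemDist N w) :=
  List.foldl_append

/-- The memory distribution of `N17` after `b^(j+1)` from `m1` (so `j` plays the role of the
`k - 1` of the statement). -/
noncomputable def bMix (j : ℕ) : Fin 3 → ℝ := ![0, 1 / (2 ^ j + 1), 1 - 1 / (2 ^ j + 1)]

lemma ostep_N17_init_b : ostep N17 N17.init false = bMix 0 := by
  funext m
  rw [ostep_apply_of_ne_zero _ _ _ _ (by simp +decide [N17, Fin.sum_univ_three])]
  fin_cases m <;> norm_num +decide [N17, bMix, Fin.sum_univ_three]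

lemma ostep_N17_bMix_b (j : ℕ) : ostep N17 (bMix j) false = bMix (j + 1) := by
  have hnorm : ∑ m', bMix j m' * N17.next m' false = (2 * 2 ^ j + 1) / (2 * (2 ^ j + 1)) := by
    simp [N17, bMix, Fin.sum_univ_three]
    field_simp
    ring
  funext m
  rw [ostep_apply_of_ne_zero _ _ _ _ (by rw [hnorm]; positivity), hnorm]
  fin_cases m
  · simp [N17, bMix]
  · simp [N17, bMix, Fin.sum_univ_three, pow_succ]
    field_simp
  · simp [N17, bMix, Fin.sum_univ_three, pow_succ]
    field_simp
    ring

lemma ostep_N17_bMix_a (j : ℕ) : ostep N17 (bMix j) true = N17.init := by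
  have hnorm : ∑ m', bMix j m' * N17.next m' true = 1 / (2 * (2 ^ j + 1)) := by
    simp [N17, bMix]
  funext m
  rw [ostep_apply_of_ne_zero _ _ _ _ (by rw [hnorm]; positivity), hnorm]
  fin_cases m <;> simp [N17, bMix, (by positivity : (2 : ℝ) ^ j + 1 ≠ 0)]

lemma foldl_ostep_N17_replicate_b (j : ℕ) :
    (List.replicate (j + 1) false).foldl (ostep N17) N17.init = bMix j := by
  induction j with
  | zero => exact ostep_N17_init_b
  | succ j ih =>
    rw [List.replicate_succ', List.foldl_append, ih]
    exact ostep_N17_bMix_b j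

lemma omemDist_N17_of_resetWord {w : List Bool} (hw : ResetWord w) :
    omemDist N17 w = N17.init := by
  induction hw with
  | nil => rfl
  | step w k hk _ ih =>
    obtain ⟨j, rfl⟩ := Nat.exists_eq_add_of_le' hk
    rw [omemDist_append, omemDist_append, ih, foldl_ostep_N17_replicate_b]
    exact ostep_N17_bMix_a j

/-- For every word `w ∈ ((sb)^+ sa)^*` the memory distribution of `N17` after
`w` is Dirac at `m1`, and for every `k ≥ 1` the distribution after
`w (sb)^k` gives probability `1/(2^{k-1}+1)` to `m2` and the complement to
`m3`. -/
theorem N17_memory_distribution (w : List Bool) (hw : ResetWord w) :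
    (∀ m, omemDist N17 w m = if m = 0 then 1 else 0) ∧
    ∀ k : ℕ, 1 ≤ k →
      omemDist N17 (w ++ List.replicate k false) 1 = 1 / (2 ^ (k - 1) + 1) ∧
      omemDist N17 (w ++ List.replicate k false) 2 = 1 - 1 / (2 ^ (k - 1) + 1) := by
  have hinit := omemDist_N17_of_resetWord hw
  refine ⟨fun m => by rw [hinit]; rfl, fun k hk => ?_⟩
  obtain ⟨j, rfl⟩ := Nat.exists_eq_add_of_le' hk
  rw [omemDist_append, hinit, foldl_ostep_N17_replicate_b]
  simp [bMix]
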